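/- Prékopa's theorem: If φ : ℝ × ℝⁿ → ℝ is a convex function such that for each t ∈ ℝ the integral ∫_{ℝⁿ} e^{-φ(t,x)} dλ(x) is finite, then the function Φ : ℝ → ℝ defined by e^{-Φ(t)} = ∫_{ℝⁿ} e^{-φ(t,x)} dλ(x) is convex. -/

import Mathlib

/-!
Prékopa–Leindler: if `f x ^ p * g y ^ q ≤ h (p • x + q • y)` then
`(∫ f) ^ p * (∫ g) ^ q ≤ ∫ h`. On `ℝ`, the hypothesis gives `p • {f > t} + q • {g > t} ⊆ {h > t}`;
when `f` and `g` have the same supremum these superlevel sets are nonempty together, so the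
one-dimensional Brunn–Minkowski inequality `|A| + |B| ≤ |A + B|` and the layer cake formula give
`p ∫ f + q ∫ g ≤ ∫ h`, and AM–GM finishes. Rescaling `f`, `g` and truncating reduces to that case.
The inequality tensorizes by Fubini, so it holds on `ℝⁿ`.

Prékopa's theorem is the case `f = e^{-φ(a, ·)}`, `g = e^{-φ(b, ·)}`, `h = e^{-φ(p a + q b, ·)}`,
where the hypothesis is exactly the convexity of `φ`.
-/

open MeasureTheory Set
open scoped ENNReal Pointwise

lemma ENNReal.iSup_rpow {ι : Sort*} (f : ι → ℝ≥0∞) {p : ℝ} (hp : 0 < p) :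
    (⨆ i, f i) ^ p = ⨆ i, f i ^ p :=
  (ENNReal.orderIsoRpow p hp).map_iSup f

lemma ENNReal.rpow_mul_rpow_le_add {p q : ℝ} (hp : 0 < p) (hq : 0 < q) (hpq : p + q = 1)
    (a b : ℝ≥0∞) : a ^ p * b ^ q ≤ ENNReal.ofReal p * a + ENNReal.ofReal q * b := by
  have := ENNReal.young_inequality (a ^ p) (b ^ q) (Real.HolderConjugate.inv_inv hp hq hpq)
  rwa [← ENNReal.rpow_mul, ← ENNReal.rpow_mul, mul_inv_cancel₀ hp.ne', mul_inv_cancel₀ hq.ne',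
    ENNReal.rpow_one, ENNReal.rpow_one, ENNReal.ofReal_inv_of_pos hp, ENNReal.ofReal_inv_of_pos hq,
    div_eq_mul_inv, div_eq_mul_inv, inv_inv, inv_inv, mul_comm a, mul_comm b] at this

lemma Real.volume_Ioi_inter_setOf_ofReal_lt (a : ℝ≥0∞) :
    volume (Ioi 0 ∩ {t : ℝ | ENNReal.ofReal t < a}) = a := by
  rcases eq_or_ne a ⊤ with rfl | ha
  · simp
  · have : Ioi 0 ∩ {t : ℝ | ENNReal.ofReal t < a} = Ioo 0 a.toReal := by
      ext t
      simp only [mem_inter_iff, mem_Ioi, mem_ofPred_eq, mem_Ioo, and_congr_right_iff]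
      exact fun ht => ENNReal.ofReal_lt_iff_lt_toReal ht.le ha
    simp [this, ha]

namespace MeasureTheory

theorem lintegral_eq_lintegral_meas_ofReal_lt {α : Type*} [MeasurableSpace α] (μ : Measure α)
    [SFinite μ] {f : α → ℝ≥0∞} (hf : Measurable f) :
    ∫⁻ x, f x ∂μ = ∫⁻ t in Ioi 0, μ {x | ENNReal.ofReal t < f x} := by
  have hS : MeasurableSet {z : α × ℝ | ENNReal.ofReal z.2 < f z.1} :=
    measurableSet_lt (ENNReal.measurable_ofReal.comp measurable_snd) (hf.comp measurable_fst)
  -- both sides are the `μ × volume` measure of the region under the graph of `f`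
  have := (Measure.prod_apply hS).symm.trans
    (Measure.prod_apply_symm (μ := μ) (ν := volume.restrict (Ioi 0)) hS)
  simpa [Measure.restrict_apply' measurableSet_Ioi, Set.inter_comm,
    Real.volume_Ioi_inter_setOf_ofReal_lt, preimage] using this

theorem lintegral_eq_iSup_lintegral_min_natCast {α : Type*} [MeasurableSpace α] (μ : Measure α)
    {f : α → ℝ≥0∞} (hf : Measurable f) : ∫⁻ x, f x ∂μ = ⨆ n : ℕ, ∫⁻ x, min (f x) n ∂μ := by
  rw [← lintegral_iSup (fun n => hf.min measurable_const)
    fun m n hmn x => min_le_min_left _ (Nat.mono_cast hmn)]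
  simp_rw [← inf_iSup_eq, ENNReal.iSup_natCast, inf_top_eq]

end MeasureTheory

theorem Real.volume_add_le_volume_add_of_isCompact {K L : Set ℝ} (hK : IsCompact K)
    (hL : IsCompact L) (hK₀ : K.Nonempty) (hL₀ : L.Nonempty) :
    volume K + volume L ≤ volume (K + L) := by
  set a := sSup K
  set b := sInf L
  have ha : a ∈ K := hK.sSup_mem hK₀
  have hb : b ∈ L := hL.sInf_mem hL₀
  have hunion : (K + {b}) ∪ ({a} + L) ⊆ K + L :=
    union_subset (add_subset_add_left (singleton_subset_iff.2 hb))
      (add_subset_add_right (singleton_subset_iff.2 ha))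
  have hinter : (K + {b}) ∩ ({a} + L) ⊆ {a + b} := by
    rintro _ ⟨⟨k, hk, _, rfl, rfl⟩, ⟨_, rfl, l, hl, hkl⟩⟩
    have := le_csSup hK.bddAbove hk
    have := csInf_le hL.bddBelow hl
    simp only [mem_singleton_iff]
    linarith
  calc volume K + volume L = volume (K + {b}) + volume ({a} + L) := by
        simp [add_singleton, singleton_add, image_add_left, image_add_right]
    _ = volume ((K + {b}) ∪ ({a} + L)) + volume ((K + {b}) ∩ ({a} + L)) :=
        (measure_union_add_inter _ (isCompact_singleton.add hL).isClosed.measurableSet).symm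
    _ ≤ volume (K + L) + volume {a + b} := add_le_add (measure_mono hunion) (measure_mono hinter)
    _ = volume (K + L) := by rw [Real.volume_singleton, add_zero]

theorem Real.volume_add_le_volume_add {A B : Set ℝ} (hA : MeasurableSet A) (hB : MeasurableSet B)
    (hA₀ : A.Nonempty) (hB₀ : B.Nonempty) : volume A + volume B ≤ volume (A + B) := by
  obtain ⟨a, ha⟩ := hA₀
  obtain ⟨b, hb⟩ := hB₀
  rw [hA.measure_eq_iSup_isCompact, hB.measure_eq_iSup_isCompact]
  simp_rw [iSup_and']
  refine ENNReal.biSup_add_biSup_le' ⟨∅, empty_subset _, isCompact_empty⟩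
    ⟨∅, empty_subset _, isCompact_empty⟩ fun K ⟨hKA, hK⟩ L ⟨hLB, hL⟩ => ?_
  calc volume K + volume L ≤ volume (insert a K) + volume (insert b L) := by
        gcongr <;> exact subset_insert _ _
    _ ≤ volume (insert a K + insert b L) :=
        Real.volume_add_le_volume_add_of_isCompact (hK.insert a) (hL.insert b)
          (insert_nonempty _ _) (insert_nonempty _ _)
    _ ≤ volume (A + B) :=
        measure_mono (add_subset_add (insert_subset ha hKA) (insert_subset hb hLB))

lemma smul_setOf_lt_add_smul_setOf_lt_subset {E : Type*} [AddCommMonoid E] [Module ℝ E]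
    {p q : ℝ} (hp : 0 < p) (hq : 0 < q) (hpq : p + q = 1) {f g h : E → ℝ≥0∞}
    (hfgh : ∀ x y, f x ^ p * g y ^ q ≤ h (p • x + q • y)) (s : ℝ≥0∞) :
    p • {x | s < f x} + q • {y | s < g y} ⊆ {z | s < h z} := by
  rintro _ ⟨_, ⟨x, hx, rfl⟩, _, ⟨y, hy, rfl⟩, rfl⟩
  calc s = s ^ p * s ^ q := by
        rw [← ENNReal.rpow_add_of_nonneg _ _ hp.le hq.le, hpq, ENNReal.rpow_one]
    _ < f x ^ p * g y ^ q :=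
        ENNReal.mul_lt_mul (ENNReal.rpow_lt_rpow hx hp) (ENNReal.rpow_lt_rpow hy hq)
    _ ≤ h (p • x + q • y) := hfgh x y

theorem Real.lintegral_rpow_mul_le_of_iSup_eq {p q : ℝ} (hp : 0 < p) (hq : 0 < q)
    (hpq : p + q = 1) {f g h : ℝ → ℝ≥0∞} (hf : Measurable f) (hg : Measurable g)
    (hh : Measurable h) (hfg : ⨆ x, f x = ⨆ x, g x)
    (hfgh : ∀ x y, f x ^ p * g y ^ q ≤ h (p • x + q • y)) :
    (∫⁻ x, f x) ^ p * (∫⁻ x, g x) ^ q ≤ ∫⁻ x, h x := by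
  have hlevel : ∀ t : ℝ, ENNReal.ofReal p * volume {x | ENNReal.ofReal t < f x}
      + ENNReal.ofReal q * volume {x | ENNReal.ofReal t < g x}
        ≤ volume {x | ENNReal.ofReal t < h x} := by
    intro t
    by_cases ht : ENNReal.ofReal t < ⨆ x, f x
    · have hA : {x | ENNReal.ofReal t < f x}.Nonempty := lt_iSup_iff.1 ht
      have hB : {x | ENNReal.ofReal t < g x}.Nonempty :=
        lt_iSup_iff.1 (hfg ▸ ht : ENNReal.ofReal t < ⨆ x, g x)
      calc _ = volume (p • {x | ENNReal.ofReal t < f x})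
            + volume (q • {x | ENNReal.ofReal t < g x}) := by
            simp [Measure.addHaar_smul, abs_of_pos hp, abs_of_pos hq]
        _ ≤ _ := Real.volume_add_le_volume_add
            ((measurableSet_lt measurable_const hf).const_smul₀ p)
            ((measurableSet_lt measurable_const hg).const_smul₀ q) hA.smul_set hB.smul_set
        _ ≤ _ := measure_mono (smul_setOf_lt_add_smul_setOf_lt_subset hp hq hpq hfgh _)
    · have hf0 : {x | ENNReal.ofReal t < f x} = ∅ :=
        eq_empty_of_forall_notMem fun x hx => ht (hx.trans_le (le_iSup f x))
      have hg0 : {x | ENNReal.ofReal t < g x} = ∅ :=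
        eq_empty_of_forall_notMem fun x hx => ht (hfg ▸ hx.trans_le (le_iSup g x))
      simp [hf0, hg0]
  have hmeas : ∀ k : ℝ → ℝ≥0∞, Measurable fun t : ℝ => volume {x | ENNReal.ofReal t < k x} :=
    fun k => Antitone.measurable fun s t hst =>
      measure_mono fun x hx => (ENNReal.ofReal_le_ofReal hst).trans_lt hx
  calc (∫⁻ x, f x) ^ p * (∫⁻ x, g x) ^ q
      ≤ ENNReal.ofReal p * (∫⁻ x, f x) + ENNReal.ofReal q * ∫⁻ x, g x :=
        ENNReal.rpow_mul_rpow_le_add hp hq hpq _ _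
    _ = ∫⁻ t in Ioi 0, (ENNReal.ofReal p * volume {x | ENNReal.ofReal t < f x}
          + ENNReal.ofReal q * volume {x | ENNReal.ofReal t < g x}) := by
        rw [lintegral_add_left ((hmeas f).const_mul _), lintegral_const_mul _ (hmeas f),
          lintegral_const_mul _ (hmeas g), lintegral_eq_lintegral_meas_ofReal_lt volume hf,
          lintegral_eq_lintegral_meas_ofReal_lt volume hg]
    _ ≤ ∫⁻ t in Ioi 0, volume {x | ENNReal.ofReal t < h x} := lintegral_mono hlevel
    _ = ∫⁻ x, h x := (lintegral_eq_lintegral_meas_ofReal_lt volume hh).symm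

theorem Real.lintegral_rpow_mul_le_of_iSup_ne_top {p q : ℝ} (hp : 0 < p) (hq : 0 < q)
    (hpq : p + q = 1) {f g h : ℝ → ℝ≥0∞} (hf : Measurable f) (hg : Measurable g)
    (hh : Measurable h) (hf_top : ⨆ x, f x ≠ ⊤) (hg_top : ⨆ x, g x ≠ ⊤)
    (hfgh : ∀ x y, f x ^ p * g y ^ q ≤ h (p • x + q • y)) :
    (∫⁻ x, f x) ^ p * (∫⁻ x, g x) ^ q ≤ ∫⁻ x, h x := by
  set a := ⨆ x, f x
  set b := ⨆ x, g x
  rcases eq_or_ne a 0 with ha | ha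
  · simp [funext (ENNReal.iSup_eq_zero.1 ha), ENNReal.zero_rpow_of_pos hp]
  rcases eq_or_ne b 0 with hb | hb
  · simp [funext (ENNReal.iSup_eq_zero.1 hb), ENNReal.zero_rpow_of_pos hq]
  set c := a⁻¹ ^ p * b⁻¹ ^ q
  have hc₀ : c ≠ 0 := mul_ne_zero (ENNReal.rpow_pos (by simpa) (by simpa)).ne'
    (ENNReal.rpow_pos (by simpa) (by simpa)).ne'
  have hc_top : c ≠ ⊤ := ENNReal.mul_ne_top (ENNReal.rpow_ne_top_of_nonneg hp.le (by simpa))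
    (ENNReal.rpow_ne_top_of_nonneg hq.le (by simpa))
  -- rescale `f` and `g` to have supremum `1`
  have key := Real.lintegral_rpow_mul_le_of_iSup_eq hp hq hpq (hf.const_mul a⁻¹)
    (hg.const_mul b⁻¹) (hh.const_mul c)
    (by rw [← ENNReal.mul_iSup, ← ENNReal.mul_iSup, ENNReal.inv_mul_cancel ha hf_top,
      ENNReal.inv_mul_cancel hb hg_top])
    (fun x y => by
      rw [ENNReal.mul_rpow_of_nonneg _ _ hp.le, ENNReal.mul_rpow_of_nonneg _ _ hq.le,
        mul_mul_mul_comm]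
      exact mul_le_mul_right (hfgh x y) c)
  rwa [lintegral_const_mul _ hf, lintegral_const_mul _ hg, lintegral_const_mul _ hh,
    ENNReal.mul_rpow_of_nonneg _ _ hp.le, ENNReal.mul_rpow_of_nonneg _ _ hq.le,
    mul_mul_mul_comm, ENNReal.mul_le_mul_iff_right hc₀ hc_top] at key

def IsPrekopaLeindler {E : Type*} [MeasurableSpace E] [AddCommMonoid E] [Module ℝ E]
    (μ : Measure E) : Prop :=
  ∀ ⦃p q : ℝ⦄, 0 < p → 0 < q → p + q = 1 → ∀ ⦃f g h : E → ℝ≥0∞⦄,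
    Measurable f → Measurable g → Measurable h → (∀ x y, f x ^ p * g y ^ q ≤ h (p • x + q • y)) →
      (∫⁻ x, f x ∂μ) ^ p * (∫⁻ x, g x ∂μ) ^ q ≤ ∫⁻ x, h x ∂μ

theorem Real.isPrekopaLeindler_volume : IsPrekopaLeindler (volume : Measure ℝ) := by
  intro p q hp hq hpq f g h hf hg hh hfgh
  rw [lintegral_eq_iSup_lintegral_min_natCast volume hf,
    lintegral_eq_iSup_lintegral_min_natCast volume hg, ENNReal.iSup_rpow _ hp,
    ENNReal.iSup_rpow _ hq, ENNReal.iSup_mul]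
  refine iSup_le fun m => ?_
  rw [ENNReal.mul_iSup]
  refine iSup_le fun n => ?_
  refine Real.lintegral_rpow_mul_le_of_iSup_ne_top hp hq hpq (hf.min measurable_const)
    (hg.min measurable_const) hh ?_ ?_ fun x y => (hfgh x y).trans' ?_
  · exact ne_top_of_le_ne_top (ENNReal.natCast_ne_top m) (iSup_le fun x => min_le_right _ _)
  · exact ne_top_of_le_ne_top (ENNReal.natCast_ne_top n) (iSup_le fun x => min_le_right _ _)
  · gcongr <;> exact min_le_left _ _

theorem isPrekopaLeindler_dirac {E : Type*} [MeasurableSpace E] [AddCommMonoid E] [Module ℝ E]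
    (x : E) : IsPrekopaLeindler (Measure.dirac x) := by
  intro p q hp hq hpq f g h hf hg hh hfgh
  simpa [lintegral_dirac' _ hf, lintegral_dirac' _ hg, lintegral_dirac' _ hh, ← add_smul, hpq]
    using hfgh x x

namespace IsPrekopaLeindler

section AddCommMonoid

variable {E F : Type*} [MeasurableSpace E] [AddCommMonoid E] [Module ℝ E]
  [MeasurableSpace F] [AddCommMonoid F] [Module ℝ F]

theorem prod {μ : Measure E} {ν : Measure F} [SFinite μ] [SFinite ν] (hμ : IsPrekopaLeindler μ)
    (hν : IsPrekopaLeindler ν) : IsPrekopaLeindler (μ.prod ν) := by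
  intro p q hp hq hpq f g h hf hg hh hfgh
  rw [lintegral_prod f hf.aemeasurable, lintegral_prod g hg.aemeasurable,
    lintegral_prod h hh.aemeasurable]
  refine hμ hp hq hpq hf.lintegral_prod_right' hg.lintegral_prod_right' hh.lintegral_prod_right'
    fun s t => hν hp hq hpq (hf.comp measurable_prodMk_left) (hg.comp measurable_prodMk_left)
      (hh.comp measurable_prodMk_left) fun x y => ?_
  simpa using hfgh (s, x) (t, y)

theorem of_measurePreserving {μ : Measure E} {ν : Measure F} (hμ : IsPrekopaLeindler μ)
    (L : E →ₗ[ℝ] F) (hL : MeasurePreserving L μ ν) : IsPrekopaLeindler ν := by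
  intro p q hp hq hpq f g h hf hg hh hfgh
  rw [← hL.lintegral_comp hf, ← hL.lintegral_comp hg, ← hL.lintegral_comp hh]
  exact hμ hp hq hpq (hf.comp hL.measurable) (hg.comp hL.measurable) (hh.comp hL.measurable)
    fun x y => by simpa using hfgh (L x) (L y)

end AddCommMonoid

section AddCommGroup

variable {E : Type*} [MeasurableSpace E] [AddCommGroup E] [Module ℝ E] {μ : Measure E}

theorem integral_rpow_mul_le (hμ : IsPrekopaLeindler μ) {p q : ℝ} (hp : 0 < p) (hq : 0 < q)
    (hpq : p + q = 1) {f g h : E → ℝ} (hf₀ : 0 ≤ f) (hg₀ : 0 ≤ g) (hh₀ : 0 ≤ h)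
    (hf : Measurable f) (hg : Measurable g) (hh : Measurable h) (hfi : Integrable f μ)
    (hgi : Integrable g μ) (hhi : Integrable h μ)
    (hfgh : ∀ x y, f x ^ p * g y ^ q ≤ h (p • x + q • y)) :
    (∫ x, f x ∂μ) ^ p * (∫ x, g x ∂μ) ^ q ≤ ∫ x, h x ∂μ := by
  have key := hμ hp hq hpq hf.ennreal_ofReal hg.ennreal_ofReal hh.ennreal_ofReal fun x y => by
    rw [ENNReal.ofReal_rpow_of_nonneg (hf₀ x) hp.le, ENNReal.ofReal_rpow_of_nonneg (hg₀ y) hq.le,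
      ← ENNReal.ofReal_mul (Real.rpow_nonneg (hf₀ x) p)]
    exact ENNReal.ofReal_le_ofReal (hfgh x y)
  rwa [← ofReal_integral_eq_lintegral_ofReal hfi (.of_forall hf₀),
    ← ofReal_integral_eq_lintegral_ofReal hgi (.of_forall hg₀),
    ← ofReal_integral_eq_lintegral_ofReal hhi (.of_forall hh₀),
    ENNReal.ofReal_rpow_of_nonneg (integral_nonneg hf₀) hp.le,
    ENNReal.ofReal_rpow_of_nonneg (integral_nonneg hg₀) hq.le,
    ← ENNReal.ofReal_mul (Real.rpow_nonneg (integral_nonneg hf₀) p),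
    ENNReal.ofReal_le_ofReal_iff (integral_nonneg hh₀)] at key

theorem convexOn_neg_log_integral_exp_neg {F : Type*} [AddCommGroup F] [Module ℝ F] [NeZero μ]
    (hμ : IsPrekopaLeindler μ) {φ : F × E → ℝ} (hφ : ConvexOn ℝ univ φ)
    (hφm : ∀ t, Measurable fun x => φ (t, x))
    (hint : ∀ t, Integrable (fun x => Real.exp (-φ (t, x))) μ) :
    ConvexOn ℝ univ fun t => -Real.log (∫ x, Real.exp (-φ (t, x)) ∂μ) := by
  refine ⟨convex_univ, fun a _ b _ p q hp hq hpq => ?_⟩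
  rcases hp.eq_or_lt with rfl | hp
  · simp [(zero_add q).symm.trans hpq]
  rcases hq.eq_or_lt with rfl | hq
  · simp [(add_zero p).symm.trans hpq]
  set I := fun t => ∫ x, Real.exp (-φ (t, x)) ∂μ
  have hI : ∀ t, 0 < I t := fun t => integral_exp_pos (hint t)
  have hlogconcave : I a ^ p * I b ^ q ≤ I (p • a + q • b) :=
    hμ.integral_rpow_mul_le hp hq hpq (fun _ => (Real.exp_pos _).le)
      (fun _ => (Real.exp_pos _).le) (fun _ => (Real.exp_pos _).le) (hφm a).neg.exp
      (hφm b).neg.exp (hφm _).neg.exp (hint a) (hint b) (hint _) fun x y => by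
        have := hφ.2 (mem_univ (a, x)) (mem_univ (b, y)) hp.le hq.le hpq
        simp only [Prod.smul_mk, Prod.mk_add_mk, smul_eq_mul] at this
        rw [← Real.exp_mul, ← Real.exp_mul, ← Real.exp_add, Real.exp_le_exp]
        linarith
  have hIa := Real.rpow_pos_of_pos (hI a) p
  have hIb := Real.rpow_pos_of_pos (hI b) q
  have := Real.log_le_log (mul_pos hIa hIb) hlogconcave
  rw [Real.log_mul hIa.ne' hIb.ne', Real.log_rpow (hI a), Real.log_rpow (hI b)] at this
  simp only [smul_eq_mul]
  linarith

end AddCommGroup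

end IsPrekopaLeindler

theorem isPrekopaLeindler_volume_pi (n : ℕ) :
    IsPrekopaLeindler (volume : Measure (Fin n → ℝ)) := by
  induction n with
  | zero =>
    rw [volume_pi, Measure.pi_of_empty]
    exact isPrekopaLeindler_dirac _
  | succ n ih =>
    refine (Real.isPrekopaLeindler_volume.prod ih).of_measurePreserving
      (Fin.consLinearEquiv ℝ fun _ => ℝ).toLinearMap ?_
    have hcons : ⇑(Fin.consLinearEquiv ℝ fun _ : Fin (n + 1) => ℝ)
        = (MeasurableEquiv.piFinSuccAbove (fun _ : Fin (n + 1) => ℝ) 0).symm := by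
      ext x : 1
      simp only [MeasurableEquiv.piFinSuccAbove_symm_apply, Fin.insertNthEquiv_zero]
      rfl
    rw [LinearEquiv.coe_coe, hcons, ← Measure.volume_eq_prod]
    exact (volume_preserving_piFinSuccAbove (fun _ : Fin (n + 1) => ℝ) 0).symm

theorem EuclideanSpace.isPrekopaLeindler_volume (n : ℕ) :
    IsPrekopaLeindler (volume : Measure (EuclideanSpace ℝ (Fin n))) :=
  (isPrekopaLeindler_volume_pi n).of_measurePreserving
    (WithLp.linearEquiv 2 ℝ (Fin n → ℝ)).symm.toLinearMap
    (EuclideanSpace.volume_preserving_symm_measurableEquiv_toLp (Fin n)).symm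

/-- **Prékopa's theorem.** If `φ : ℝ × ℝⁿ → ℝ` is convex and for each `t` the integral
`∫_{ℝⁿ} e^{-φ(t,x)} dλ(x)` is finite, then `Φ(t) := -log ∫_{ℝⁿ} e^{-φ(t,x)} dλ(x)`
(so that `e^{-Φ(t)}` equals the integral) is convex. -/
theorem prekopa (n : ℕ) (φ : ℝ × EuclideanSpace ℝ (Fin n) → ℝ)
    (hφ : ConvexOn ℝ Set.univ φ)
    (hint : ∀ t : ℝ, Integrable (fun x : EuclideanSpace ℝ (Fin n) => Real.exp (-φ (t, x)))) :
    ConvexOn ℝ Set.univ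
      (fun t : ℝ => -Real.log (∫ x : EuclideanSpace ℝ (Fin n), Real.exp (-φ (t, x)))) :=
  (EuclideanSpace.isPrekopaLeindler_volume n).convexOn_neg_log_integral_exp_neg hφ
    (fun t => (hφ.locallyLipschitz.continuous.comp (Continuous.prodMk_right t)).measurable) hint
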